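/- arXiv:0912.4570 — 4 statements merged into one kernel-verified Lean document; each statement's English description precedes it below -/
import Mathlib

section
/- Let f_1,…,f_K : R^n → R be convex C^{1,1} functions with Lipschitz constants L(f_i), F = Σ_i f_i, and 0 < μ ≤ 1/max_i L(f_i). Fix i and points v^1,…,v^{i−1}, v^{i+1},…,v^K ∈ R^n, and let p be the minimizer over u of Q_i(u) := f_i(u) + Σ_{j≠i} [f_j(v^j) + ⟨∇f_j(v^j), u − v^j⟩ + (1/(2μ))‖u − v^j‖²]. Then for every u ∈ R^n, 2μ(F(u) − F(p)) ≥ Σ_{j≠i} (‖p − u‖² − ‖v^j − u‖²). -/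
open RealInnerProductSpace Finset

section Aux
variable {E : Type*} [NormedAddCommGroup E] [InnerProductSpace ℝ E] [CompleteSpace E]

lemma line_hasDerivAt {f : E → ℝ} {G : E → E} (hf : ∀ y, HasGradientAt f (G y) y)
    (x d : E) (t : ℝ) :
    HasDerivAt (fun s : ℝ => f (x + s • d)) ⟪G (x + t • d), d⟫ t := by
  have hline : HasDerivAt (fun s : ℝ => x + s • d) d t := by
    simpa using ((hasDerivAt_id t).smul_const d).const_add x
  have hfd : HasFDerivAt f (InnerProductSpace.toDual ℝ E (G (x + t • d))) (x + t • d) := hf _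
  simpa [InnerProductSpace.toDual_apply_apply, Function.comp_def] using hfd.comp_hasDerivAt t hline

lemma subgrad {f : E → ℝ} {G : E → E} (hc : ConvexOn ℝ Set.univ f)
    (hf : ∀ y, HasGradientAt f (G y) y) (x y : E) :
    f x + ⟪G x, y - x⟫ ≤ f y := by
  set φ : ℝ → ℝ := fun t => f (x + t • (y - x)) with hφdef
  have hconvφ : ConvexOn ℝ Set.univ φ := by
    have h := hc.comp_affineMap (AffineMap.lineMap x y : ℝ →ᵃ[ℝ] E)
    have : φ = (f ∘ (AffineMap.lineMap x y : ℝ →ᵃ[ℝ] E)) := by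
      funext t
      simp [hφdef, AffineMap.lineMap_apply, Function.comp, add_comm, vsub_eq_sub, vadd_eq_add]
    rw [this]
    simpa using h
  have hd : HasDerivAt φ ⟪G x, y - x⟫ 0 := by
    have h := line_hasDerivAt hf x (y - x) 0
    simpa using h
  have hle := hconvφ.le_slope_of_hasDerivAt (Set.mem_univ (0:ℝ)) (Set.mem_univ (1:ℝ)) one_pos hd
  have hs : slope φ 0 1 = f y - f x := by
    simp [slope_def_field, hφdef]
  rw [hs] at hle
  linarith

lemma convex_of_monotone_grad {f : E → ℝ} {G : E → E}
    (hf : ∀ y, HasGradientAt f (G y) y)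
    (hm : ∀ x y, 0 ≤ ⟪G x - G y, x - y⟫) : ConvexOn ℝ Set.univ f := by
  refine ⟨convex_univ, fun x _ y _ a b ha hb hab => ?_⟩
  set d := y - x with hd
  set φ : ℝ → ℝ := fun t => f (x + t • d) with hφ
  have hφd : ∀ t, HasDerivAt φ ⟪G (x + t • d), d⟫ t := fun t => line_hasDerivAt hf x d t
  have hdiff : Differentiable ℝ φ := fun t => (hφd t).differentiableAt
  have hderiv : deriv φ = fun t => ⟪G (x + t • d), d⟫ := funext fun t => (hφd t).deriv
  have hmono : Monotone (deriv φ) := by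
    rw [hderiv]
    intro s t hst
    rcases eq_or_lt_of_le hst with rfl | h
    · exact le_refl _
    · have h0 := hm (x + t • d) (x + s • d)
      have he : (x + t • d) - (x + s • d) = (t - s) • d := by
        rw [sub_smul]; abel
      rw [he, real_inner_smul_right, inner_sub_left] at h0
      have hts : 0 < t - s := by linarith
      nlinarith
  have hφc : ConvexOn ℝ Set.univ φ := hmono.convexOn_univ_of_deriv hdiff
  have hineq := hφc.2 (Set.mem_univ (0:ℝ)) (Set.mem_univ (1:ℝ)) ha hb hab
  have hb1 : φ (a * 0 + b * 1) = f (a • x + b • y) := by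
    have : a • x + b • y = x + b • d := by
      have hax : a = 1 - b := by linarith
      rw [hax, hd]; module
    simp [hφ, this]
  simp only [smul_eq_mul] at hineq
  rw [hb1] at hineq
  have h0 : φ 0 = f x := by simp [hφ]
  have h1 : φ 1 = f y := by
    simp only [hφ, one_smul, hd]
    congr 1; abel
  rw [h0, h1] at hineq
  exact hineq

lemma descent {f : E → ℝ} {G : E → E} {L : ℝ}
    (hf : ∀ y, HasGradientAt f (G y) y)
    (hlip : ∀ x y, ‖G x - G y‖ ≤ L * ‖x - y‖) (x y : E) :
    f y ≤ f x + ⟪G x, y - x⟫ + L / 2 * ‖y - x‖ ^ 2 := by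
  set h : E → ℝ := fun u => L / 2 * ⟪u, u⟫ - f u with hh
  set Gh : E → E := fun u => L • u - G u with hGhdef
  have hGh : ∀ u, HasGradientAt h (Gh u) u := by
    intro u
    have hsq : HasFDerivAt (fun w : E => ⟪w, w⟫)
        ((fderivInnerCLM ℝ (u, u)).comp ((ContinuousLinearMap.id ℝ E).prod
          (ContinuousLinearMap.id ℝ E))) u :=
      (hasFDerivAt_id u).inner ℝ (hasFDerivAt_id u)
    have hfu : HasFDerivAt f (InnerProductSpace.toDual ℝ E (G u)) u := hf u
    have h2 := (hsq.const_mul (L / 2)).sub hfu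
    rw [hasGradientAt_iff_hasFDerivAt]
    refine h2.congr_fderiv ?_
    ext w
    simp [hGhdef, inner_sub_left, real_inner_smul_left, real_inner_comm u w]
    ring
  have hmono : ∀ a b : E, 0 ≤ ⟪Gh a - Gh b, a - b⟫ := by
    intro a b
    have h1 : Gh a - Gh b = L • (a - b) - (G a - G b) := by
      simp only [hGhdef, smul_sub]; abel
    rw [h1, inner_sub_left, real_inner_smul_left, real_inner_self_eq_norm_sq]
    have h2 : ⟪G a - G b, a - b⟫ ≤ ‖G a - G b‖ * ‖a - b‖ := real_inner_le_norm _ _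
    have h3 : ‖G a - G b‖ * ‖a - b‖ ≤ (L * ‖a - b‖) * ‖a - b‖ :=
      mul_le_mul_of_nonneg_right (hlip a b) (norm_nonneg _)
    nlinarith [norm_nonneg (a - b)]
  have hconvh : ConvexOn ℝ Set.univ h := convex_of_monotone_grad hGh hmono
  have hs := subgrad hconvh hGh x y
  simp only [hh, hGhdef] at hs
  have hexp : ⟪L • x - G x, y - x⟫ = L * ⟪x, y - x⟫ - ⟪G x, y - x⟫ := by
    rw [inner_sub_left, real_inner_smul_left]
  rw [hexp] at hs
  have hid : ‖y - x‖ ^ 2 = ⟪y, y⟫ - 2 * ⟪x, y⟫ + ⟪x, x⟫ := by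
    rw [← real_inner_self_eq_norm_sq]
    simp only [inner_sub_left, inner_sub_right, real_inner_comm x y]
    ring
  have hxy : ⟪x, y - x⟫ = ⟪x, y⟫ - ⟪x, x⟫ := by rw [inner_sub_right]
  rw [hid]
  rw [hxy] at hs
  linarith

lemma sq_identity (p v u : E) : ‖p - u‖ ^ 2 - ‖v - u‖ ^ 2 = 2 * ⟪p - v, p - u⟫ - ‖p - v‖ ^ 2 := by
  have h : v - u = (v - p) + (p - u) := by abel
  rw [h, norm_add_sq_real, norm_sub_rev v p]
  have h2 : ⟪v - p, p - u⟫ = -⟪p - v, p - u⟫ := by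
    rw [← neg_sub p v, inner_neg_left]
  rw [h2]; ring

lemma hasGradientAt_inner_sub (c v x : E) :
    HasGradientAt (fun u : E => ⟪c, u - v⟫) c x := by
  rw [hasGradientAt_iff_hasFDerivAt]
  have h : HasFDerivAt (fun u : E => u - v) (ContinuousLinearMap.id ℝ E) x :=
    (hasFDerivAt_id x).sub_const v
  have h2 := ((innerSL ℝ c).hasFDerivAt (x := x - v)).comp x h
  exact h2.congr_fderiv (by ext w; simp)

lemma hasGradientAt_normsq_sub (r : ℝ) (v x : E) :
    HasGradientAt (fun u : E => r * ‖u - v‖ ^ 2) ((2 * r) • (x - v)) x := by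
  have hfun : (fun u : E => r * ‖u - v‖ ^ 2) = fun u : E => r * ⟪u - v, u - v⟫ := by
    funext u; rw [real_inner_self_eq_norm_sq]
  rw [hfun, hasGradientAt_iff_hasFDerivAt]
  have h : HasFDerivAt (fun u : E => u - v) (ContinuousLinearMap.id ℝ E) x :=
    (hasFDerivAt_id x).sub_const v
  have h2 := (h.inner ℝ h).const_mul r
  refine h2.congr_fderiv ?_
  ext w
  simp [InnerProductSpace.toDual_apply_apply, real_inner_smul_left, real_inner_comm (x - v) w,
    inner_sub_left]
  ring

end Aux

theorem key_lemma (n K : ℕ) (f : Fin K → EuclideanSpace ℝ (Fin n) → ℝ)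
    (g : Fin K → EuclideanSpace ℝ (Fin n) → EuclideanSpace ℝ (Fin n))
    (L : Fin K → ℝ) (μ : ℝ) (i : Fin K)
    (v : Fin K → EuclideanSpace ℝ (Fin n)) (p : EuclideanSpace ℝ (Fin n))
    (hconv : ∀ j, ConvexOn ℝ Set.univ (f j))
    (hgrad : ∀ j x, HasGradientAt (f j) (g j x) x)
    (hlip : ∀ j x y, ‖g j x - g j y‖ ≤ L j * ‖x - y‖)
    (hμ0 : 0 < μ)
    (hμ : μ ≤ 1 / (Finset.univ.sup' ⟨i, Finset.mem_univ i⟩ L))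
    (hp : ∀ u, f i p + ∑ j ∈ Finset.univ.erase i,
          (f j (v j) + ⟪g j (v j), p - v j⟫ + (1 / (2 * μ)) * ‖p - v j‖ ^ 2)
        ≤ f i u + ∑ j ∈ Finset.univ.erase i,
          (f j (v j) + ⟪g j (v j), u - v j⟫ + (1 / (2 * μ)) * ‖u - v j‖ ^ 2)) :
    ∀ u, 2 * μ * ((∑ j, f j u) - (∑ j, f j p)) ≥
      ∑ j ∈ Finset.univ.erase i, (‖p - u‖ ^ 2 - ‖v j - u‖ ^ 2) := by
  intro u
  set s : Finset (Fin K) := Finset.univ.erase i with hsdef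
  -- Lipschitz constants are bounded by 1/μ
  have hLj : ∀ j, L j ≤ 1 / μ := by
    intro j
    set S := Finset.univ.sup' ⟨i, Finset.mem_univ i⟩ L with hS
    have h1 : L j ≤ S := Finset.le_sup' L (Finset.mem_univ j)
    have hSpos : 0 < S := by
      by_contra hcon
      push_neg at hcon
      have : 1 / S ≤ 0 := one_div_nonpos.mpr hcon
      linarith
    have h2 : μ * S ≤ 1 := by
      rw [le_div_iff₀ hSpos] at hμ
      linarith
    have h3 : S ≤ 1 / μ := by
      rw [le_div_iff₀ hμ0]; nlinarith
    linarith
  -- descent inequality for each j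
  have h3 : ∀ j, f j p ≤ f j (v j) + ⟪g j (v j), p - v j⟫ + 1 / (2 * μ) * ‖p - v j‖ ^ 2 := by
    intro j
    have hd := descent (hgrad j) (hlip j) (v j) p
    have hcoef : L j / 2 * ‖p - v j‖ ^ 2 ≤ 1 / (2 * μ) * ‖p - v j‖ ^ 2 := by
      apply mul_le_mul_of_nonneg_right _ (sq_nonneg _)
      have h4 := hLj j
      have h5 : 1 / (2 * μ) = (1 / μ) / 2 := by ring
      linarith
    linarith
  -- optimality condition
  have hQ : HasFDerivAt (fun u => f i u + ∑ j ∈ s,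
        (f j (v j) + ⟪g j (v j), u - v j⟫ + (1 / (2 * μ)) * ‖u - v j‖ ^ 2))
      (InnerProductSpace.toDual ℝ (EuclideanSpace ℝ (Fin n))
        (g i p + ∑ j ∈ s, (g j (v j) + μ⁻¹ • (p - v j)))) p := by
    have hterm : ∀ j ∈ s, HasFDerivAt (fun u =>
          f j (v j) + ⟪g j (v j), u - v j⟫ + (1 / (2 * μ)) * ‖u - v j‖ ^ 2)
        (InnerProductSpace.toDual ℝ (EuclideanSpace ℝ (Fin n))
          (g j (v j) + μ⁻¹ • (p - v j))) p := by
      intro j _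
      have hc : HasFDerivAt (fun u : EuclideanSpace ℝ (Fin n) => ⟪g j (v j), u - v j⟫)
          (InnerProductSpace.toDual ℝ _ (g j (v j))) p :=
        hasGradientAt_inner_sub (g j (v j)) (v j) p
      have hq := hasGradientAt_normsq_sub (1 / (2 * μ)) (v j) p
      rw [show (2 : ℝ) * (1 / (2 * μ)) = μ⁻¹ by field_simp] at hq
      have hq' : HasFDerivAt (fun u : EuclideanSpace ℝ (Fin n) => 1 / (2 * μ) * ‖u - v j‖ ^ 2)
          (InnerProductSpace.toDual ℝ _ (μ⁻¹ • (p - v j))) p := hq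
      have hall := ((hasFDerivAt_const (f j (v j)) p).add hc).add hq'
      refine hall.congr_fderiv ?_
      rw [map_add, zero_add]
    have hsum := HasFDerivAt.fun_sum hterm
    have hfi : HasFDerivAt (f i) (InnerProductSpace.toDual ℝ _ (g i p)) p := hgrad i p
    have hall := hfi.add hsum
    refine hall.congr_fderiv ?_
    rw [map_add, map_sum]
  have hmin : IsLocalMin (fun u => f i u + ∑ j ∈ s,
      (f j (v j) + ⟪g j (v j), u - v j⟫ + (1 / (2 * μ)) * ‖u - v j‖ ^ 2)) p :=
    Filter.Eventually.of_forall hp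
  have hzero := hmin.hasFDerivAt_eq_zero hQ
  have hstar : g i p + ∑ j ∈ s, (g j (v j) + μ⁻¹ • (p - v j)) = 0 := by
    have h := congrArg (InnerProductSpace.toDual ℝ (EuclideanSpace ℝ (Fin n))).symm hzero
    simpa using h
  -- subgradient inequalities
  have hsub1 : f i p + ⟪g i p, u - p⟫ ≤ f i u := subgrad (hconv i) (hgrad i) p u
  have hsub2 : ∀ j : Fin K, f j (v j) + ⟪g j (v j), u - v j⟫ ≤ f j u := fun j =>
    subgrad (hconv j) (hgrad j) (v j) u
  have hterm : ∀ j ∈ s, ⟪g j (v j), u - p⟫ - 1 / (2 * μ) * ‖p - v j‖ ^ 2 ≤ f j u - f j p := by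
    intro j _
    have e : ⟪g j (v j), u - p⟫ = ⟪g j (v j), u - v j⟫ - ⟪g j (v j), p - v j⟫ := by
      rw [inner_sub_right, inner_sub_right, inner_sub_right]; ring
    rw [e]
    linarith [hsub2 j, h3 j]
  have hsumineq : ∑ j ∈ s, (⟪g j (v j), u - p⟫ - 1 / (2 * μ) * ‖p - v j‖ ^ 2)
      ≤ ∑ j ∈ s, (f j u - f j p) := Finset.sum_le_sum hterm
  -- rewrite the inner-product sum via the optimality condition
  have hinner : ⟪g i p, u - p⟫ + ∑ j ∈ s, ⟪g j (v j), u - p⟫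
      = ∑ j ∈ s, μ⁻¹ * ⟪p - v j, p - u⟫ := by
    have h1 : g i p + ∑ j ∈ s, g j (v j) = - ∑ j ∈ s, μ⁻¹ • (p - v j) := by
      rw [Finset.sum_add_distrib, ← add_assoc] at hstar
      exact eq_neg_of_add_eq_zero_left hstar
    have h2 : ⟪g i p + ∑ j ∈ s, g j (v j), u - p⟫
        = ⟪g i p, u - p⟫ + ∑ j ∈ s, ⟪g j (v j), u - p⟫ := by
      rw [inner_add_left, sum_inner]
    rw [← h2, h1, inner_neg_left, sum_inner, ← Finset.sum_neg_distrib]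
    apply Finset.sum_congr rfl
    intro j _
    rw [real_inner_smul_left]
    have e : ⟪p - v j, u - p⟫ = -⟪p - v j, p - u⟫ := by
      rw [← inner_neg_right]; congr 1; abel
    rw [e]; ring
  have hF : (∑ j, f j u) - (∑ j, f j p) = (f i u - f i p) + ∑ j ∈ s, (f j u - f j p) := by
    rw [← Finset.sum_sub_distrib, ← Finset.add_sum_erase _ _ (Finset.mem_univ i)]
  have hkey : ∑ j ∈ s, (μ⁻¹ * ⟪p - v j, p - u⟫ - 1 / (2 * μ) * ‖p - v j‖ ^ 2)
      ≤ (∑ j, f j u) - (∑ j, f j p) := by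
    have e : ∑ j ∈ s, (μ⁻¹ * ⟪p - v j, p - u⟫ - 1 / (2 * μ) * ‖p - v j‖ ^ 2)
        = (⟪g i p, u - p⟫ + ∑ j ∈ s, ⟪g j (v j), u - p⟫)
          - ∑ j ∈ s, 1 / (2 * μ) * ‖p - v j‖ ^ 2 := by
      rw [hinner, Finset.sum_sub_distrib]
    have e2 : ∑ j ∈ s, (⟪g j (v j), u - p⟫ - 1 / (2 * μ) * ‖p - v j‖ ^ 2)
        = ∑ j ∈ s, ⟪g j (v j), u - p⟫ - ∑ j ∈ s, 1 / (2 * μ) * ‖p - v j‖ ^ 2 :=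
      Finset.sum_sub_distrib _ _
    rw [e, hF]
    rw [e2] at hsumineq
    linarith
  rw [ge_iff_le]
  calc ∑ j ∈ s, (‖p - u‖ ^ 2 - ‖v j - u‖ ^ 2)
      = ∑ j ∈ s, (2 * ⟪p - v j, p - u⟫ - ‖p - v j‖ ^ 2) :=
        Finset.sum_congr rfl fun j _ => sq_identity p (v j) u
    _ = 2 * μ * ∑ j ∈ s, (μ⁻¹ * ⟪p - v j, p - u⟫ - 1 / (2 * μ) * ‖p - v j‖ ^ 2) := by
        rw [Finset.mul_sum]
        apply Finset.sum_congr rfl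
        intro j _
        field_simp
    _ ≤ 2 * μ * ((∑ j, f j u) - (∑ j, f j p)) :=
        mul_le_mul_of_nonneg_left hkey (by linarith)
end

section
/- Under the setting of the key lemma, taking u = v^j = w for all j ≠ i and p the minimizer of Q_i, one has 2μ(F(w) − F(p)) ≥ (K−1)‖p − w‖² ≥ 0; in particular F(p) ≤ F(w), so each subproblem step does not increase F. -/
open RealInnerProductSpace Finset

lemma line_hasDerivAt_s6 {E : Type*} [NormedAddCommGroup E] [InnerProductSpace ℝ E] [CompleteSpace E]
    (f : E → ℝ) (g : E → E) (hgrad : ∀ x, HasGradientAt f (g x) x)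
    (w v : E) (t : ℝ) :
    HasDerivAt (fun s : ℝ => f (w + s • v)) ⟪g (w + t • v), v⟫ t := by
  have hline : HasDerivAt (fun s : ℝ => w + s • v) v t := by
    simpa using ((hasDerivAt_id t).smul_const v).const_add w
  have hf := (hasGradientAt_iff_hasFDerivAt.mp (hgrad (w + t • v)))
  have := hf.comp_hasDerivAt t hline
  exact this

lemma descent_lemma {E : Type*} [NormedAddCommGroup E] [InnerProductSpace ℝ E] [CompleteSpace E]
    (f : E → ℝ) (g : E → E) (C : ℝ)
    (hgrad : ∀ x, HasGradientAt f (g x) x)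
    (hlip : ∀ x y, ‖g x - g y‖ ≤ C * ‖x - y‖) (w p : E) :
    f p ≤ f w + ⟪g w, p - w⟫ + C / 2 * ‖p - w‖ ^ 2 := by
  set v := p - w with hv
  set h : ℝ → ℝ := fun t => f (w + t • v) - t * ⟪g w, v⟫ - t ^ 2 * (C / 2 * ‖v‖ ^ 2) with hh
  have hderiv : ∀ t : ℝ, HasDerivAt h (⟪g (w + t • v), v⟫ - ⟪g w, v⟫ - 2 * t * (C / 2 * ‖v‖ ^ 2)) t := by
    intro t
    have h1 := line_hasDerivAt_s6 f g hgrad w v t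
    have h2 : HasDerivAt (fun s : ℝ => s * ⟪g w, v⟫) ⟪g w, v⟫ t := by
      simpa using (hasDerivAt_id t).mul_const ⟪g w, v⟫
    have h3 : HasDerivAt (fun s : ℝ => s ^ 2 * (C / 2 * ‖v‖ ^ 2)) (2 * t * (C / 2 * ‖v‖ ^ 2)) t := by
      simpa using ((hasDerivAt_pow 2 t).mul_const (C / 2 * ‖v‖ ^ 2))
    exact (h1.sub h2).sub h3
  have hanti : AntitoneOn h (Set.Icc (0:ℝ) 1) := by
    apply antitoneOn_of_deriv_nonpos (convex_Icc 0 1)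
    · exact fun t _ => ((hderiv t).continuousAt).continuousWithinAt
    · exact fun t _ => ((hderiv t).differentiableAt).differentiableWithinAt
    · intro t ht
      rw [(hderiv t).deriv]
      rw [interior_Icc] at ht
      have hcs : ⟪g (w + t • v) - g w, v⟫ ≤ ‖g (w + t • v) - g w‖ * ‖v‖ :=
        real_inner_le_norm _ _
      have hl : ‖g (w + t • v) - g w‖ ≤ C * (t * ‖v‖) := by
        have := hlip (w + t • v) w
        simpa [norm_smul, abs_of_nonneg ht.1.le, mul_assoc] using this
      have hinner : ⟪g (w + t • v), v⟫ - ⟪g w, v⟫ ≤ C * t * ‖v‖ ^ 2 := by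
        rw [← inner_sub_left]
        calc ⟪g (w + t • v) - g w, v⟫ ≤ ‖g (w + t • v) - g w‖ * ‖v‖ := hcs
          _ ≤ C * (t * ‖v‖) * ‖v‖ := by
              apply mul_le_mul_of_nonneg_right hl (norm_nonneg v)
          _ = C * t * ‖v‖ ^ 2 := by ring
      nlinarith [hinner]
  have h10 : h 1 ≤ h 0 := hanti (by norm_num) (by norm_num) (by norm_num)
  have e1 : h 1 = f p - ⟪g w, v⟫ - C / 2 * ‖v‖ ^ 2 := by
    simp [hh, hv]
  have e0 : h 0 = f w := by simp [hh]
  rw [e1, e0] at h10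
  linarith

theorem subproblem_decrease (n K : ℕ) (f : Fin K → EuclideanSpace ℝ (Fin n) → ℝ)
    (g : Fin K → EuclideanSpace ℝ (Fin n) → EuclideanSpace ℝ (Fin n))
    (L : Fin K → ℝ) (μ : ℝ) (i : Fin K)
    (w p : EuclideanSpace ℝ (Fin n))
    (hconv : ∀ j, ConvexOn ℝ Set.univ (f j))
    (hgrad : ∀ j x, HasGradientAt (f j) (g j x) x)
    (hlip : ∀ j x y, ‖g j x - g j y‖ ≤ L j * ‖x - y‖)
    (hμ0 : 0 < μ)
    (hμ : μ ≤ 1 / (Finset.univ.sup' ⟨i, Finset.mem_univ i⟩ L))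
    (hp : ∀ u, f i p + ∑ j ∈ Finset.univ.erase i,
          (f j w + ⟪g j w, p - w⟫ + (1 / (2 * μ)) * ‖p - w‖ ^ 2)
        ≤ f i u + ∑ j ∈ Finset.univ.erase i,
          (f j w + ⟪g j w, u - w⟫ + (1 / (2 * μ)) * ‖u - w‖ ^ 2)) :
    2 * μ * ((∑ j, f j w) - (∑ j, f j p)) ≥ ((K : ℝ) - 1) * ‖p - w‖ ^ 2 ∧
      ((K : ℝ) - 1) * ‖p - w‖ ^ 2 ≥ 0 ∧ (∑ j, f j p) ≤ (∑ j, f j w) := by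
  set S := Finset.univ.sup' ⟨i, Finset.mem_univ i⟩ L with hSdef
  have hS : 0 < S := one_div_pos.mp (lt_of_lt_of_le hμ0 hμ)
  have hμS : μ * S ≤ 1 := by
    rw [le_div_iff₀ hS] at hμ; exact hμ
  have hLbound : ∀ j, L j ≤ 1 / μ := by
    intro j
    have h1 : L j ≤ S := Finset.le_sup' L (Finset.mem_univ j)
    have h2 : S ≤ 1 / μ := by
      rw [le_div_iff₀ hμ0]; nlinarith
    linarith
  set d := ‖p - w‖ ^ 2 with hd
  have hd0 : 0 ≤ d := by positivity
  have hdesc : ∀ j, f j p ≤ f j w + ⟪g j w, p - w⟫ + (1 / (2 * μ)) * d := by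
    intro j
    have h1 := descent_lemma (f j) (g j) (L j) (hgrad j) (hlip j) w p
    rw [← hd] at h1
    have h2 : L j / 2 * d ≤ (1 / (2 * μ)) * d := by
      apply mul_le_mul_of_nonneg_right _ hd0
      have := hLbound j
      rw [div_le_div_iff₀ (by norm_num) (by positivity)]
      calc L j * (2 * μ) = (L j * μ) * 2 := by ring
        _ ≤ 1 * 2 := by
            have : L j * μ ≤ (1/μ) * μ := by nlinarith [hLbound j]
            rw [one_div, inv_mul_cancel₀ (ne_of_gt hμ0)] at this
            linarith
      
    linarith
  set a := 1 / (2 * μ) with ha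
  have ha0 : 0 < a := by rw [ha]; positivity
  set E := Finset.univ.erase i with hE
  set m := E.card with hm
  have hK1 : 1 ≤ K := Nat.one_le_iff_ne_zero.mpr (by rintro rfl; exact i.elim0)
  have hmK : (m : ℝ) = (K : ℝ) - 1 := by
    have : m = K - 1 := by
      rw [hm, hE, Finset.card_erase_of_mem (Finset.mem_univ i)]
      simp
    rw [this, Nat.cast_sub hK1, Nat.cast_one]
  set I := ∑ j ∈ E, ⟪g j w, p - w⟫ with hI
  set Cw := ∑ j ∈ E, f j w with hCw
  -- sum splits
  have hFw : ∑ j, f j w = f i w + Cw := (Finset.add_sum_erase _ _ (Finset.mem_univ i)).symm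
  have hFp : ∑ j, f j p = f i p + ∑ j ∈ E, f j p := (Finset.add_sum_erase _ _ (Finset.mem_univ i)).symm
  -- Step A
  have hQp : ∑ j, f j p ≤ f i p + (Cw + I + (m : ℝ) * (a * d)) := by
    rw [hFp]
    have : ∑ j ∈ E, f j p ≤ ∑ j ∈ E, (f j w + ⟪g j w, p - w⟫ + a * d) :=
      Finset.sum_le_sum fun j _ => hdesc j
    have hsplit : ∑ j ∈ E, (f j w + ⟪g j w, p - w⟫ + a * d)
        = Cw + I + (m : ℝ) * (a * d) := by
      rw [Finset.sum_add_distrib, Finset.sum_add_distrib, Finset.sum_const, nsmul_eq_mul]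
    linarith
  -- Step B : key inequality for each small t
  have hp_simp : ∀ t : ℝ, 0 < t → t ≤ 1 →
      f i p + I + (m : ℝ) * (a * d) * (2 - t) ≤ f i w := by
    intro t ht0 ht1
    set u : EuclideanSpace ℝ (Fin n) := p + t • (w - p) with hu
    have huw : u - w = (1 - t) • (p - w) := by rw [hu]; module
    have hinner : ∀ j, ⟪g j w, u - w⟫ = (1 - t) * ⟪g j w, p - w⟫ := by
      intro j; rw [huw, real_inner_smul_right]
    have hnorm : ‖u - w‖ ^ 2 = (1 - t) ^ 2 * d := by
      rw [huw, norm_smul, mul_pow, Real.norm_eq_abs, sq_abs, hd]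
    have hconvu : f i u ≤ (1 - t) * f i p + t * f i w := by
      have hcomb : u = (1 - t) • p + t • w := by rw [hu]; module
      have := (hconv i).2 (Set.mem_univ p) (Set.mem_univ w)
        (by linarith : (0:ℝ) ≤ 1 - t) (le_of_lt ht0) (by ring)
      rw [← hcomb] at this
      simpa using this
    have hlhs : ∑ j ∈ E, (f j w + ⟪g j w, p - w⟫ + a * ‖p - w‖ ^ 2)
        = Cw + I + (m : ℝ) * (a * d) := by
      rw [Finset.sum_add_distrib, Finset.sum_add_distrib, Finset.sum_const, nsmul_eq_mul, ← hd]
    have hrhs : ∑ j ∈ E, (f j w + ⟪g j w, u - w⟫ + a * ‖u - w‖ ^ 2)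
        = Cw + (1 - t) * I + (m : ℝ) * (a * ((1 - t) ^ 2 * d)) := by
      simp only [hinner, hnorm]
      rw [Finset.sum_add_distrib, Finset.sum_add_distrib, Finset.sum_const, nsmul_eq_mul,
        ← Finset.mul_sum]
    have hineq := hp u
    rw [hlhs, hrhs] at hineq
    have key : t * (f i p + I + (m : ℝ) * (a * d) * (2 - t)) ≤ t * f i w := by
      linarith [hineq, hconvu]
    exact le_of_mul_le_mul_left key ht0
  -- Step C : take t → 0
  have hC : f i p + I + 2 * ((m : ℝ) * (a * d)) ≤ f i w := by
    have hmad : 0 ≤ (m : ℝ) * (a * d) :=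
      mul_nonneg (Nat.cast_nonneg m) (mul_nonneg ha0.le hd0)
    set B := (m : ℝ) * (a * d) with hB
    apply le_of_forall_pos_le_add
    intro ε hε
    set t := min 1 (ε / (B + 1)) with ht
    have ht0 : 0 < t := lt_min one_pos (div_pos hε (by linarith))
    have ht1 : t ≤ 1 := min_le_left _ _
    have h1 := hp_simp t ht0 ht1
    have h2 : B * t ≤ ε := by
      have h3 : t ≤ ε / (B + 1) := min_le_right _ _
      have h4 : B * t ≤ B * (ε / (B + 1)) := mul_le_mul_of_nonneg_left h3 hmad
      have h5 : B * (ε / (B + 1)) ≤ ε := by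
        rw [mul_div_assoc', div_le_iff₀ (by linarith)]
        nlinarith
      linarith
    nlinarith [h1]
  -- conclude
  have hmain : ∑ j, f j w - ∑ j, f j p ≥ (m : ℝ) * (a * d) := by
    rw [hFw]
    linarith [hQp, hC]
  have h2μa : 2 * μ * a = 1 := by
    rw [ha]; field_simp
  have hG1 : 2 * μ * ((∑ j, f j w) - (∑ j, f j p)) ≥ ((K : ℝ) - 1) * d := by
    have h1 : 2 * μ * ((∑ j, f j w) - (∑ j, f j p)) ≥ 2 * μ * ((m : ℝ) * (a * d)) := by
      apply mul_le_mul_of_nonneg_left hmain (by linarith)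
    have h2 : 2 * μ * ((m : ℝ) * (a * d)) = ((K : ℝ) - 1) * d := by
      rw [← hmK]
      calc 2 * μ * ((m : ℝ) * (a * d)) = (2 * μ * a) * ((m : ℝ) * d) := by ring
        _ = 1 * ((m : ℝ) * d) := by rw [h2μa]
        _ = (m : ℝ) * d := one_mul _
    linarith
  have hG2 : ((K : ℝ) - 1) * d ≥ 0 := by
    apply mul_nonneg _ hd0
    have : (1 : ℝ) ≤ (K : ℝ) := by exact_mod_cast hK1
    linarith
  refine ⟨hG1, hG2, ?_⟩
  nlinarith [hG1, hG2, hμ0]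
end

section
/- (Convergence rate of MSA) Let f_1,…,f_K be convex C^{1,1} functions, F = Σ f_i, x* a minimizer of F, and 0 < μ ≤ 1/max_i L(f_i). Let the sequences x_{(k)}^i, w_{(k)}^i be generated by the multiple splitting algorithm: x_{(k+1)}^i = argmin_u f_i(u) + Σ_{j≠i}[f_j(w_{(k)}^i) + ⟨∇f_j(w_{(k)}^i), u − w_{(k)}^i⟩ + (1/(2μ))‖u − w_{(k)}^i‖²], and (w_{(k+1)}^1,…,w_{(k+1)}^K) = (x_{(k+1)}^1,…,x_{(k+1)}^K) D^{(k+1)} with D^{(k+1)} doubly stochastic, starting from w_{(0)}^i = x_0 for all i. Then for all k ≥ 1, min_i F(x_{(k)}^i) − F(x*) ≤ (K−1)‖x_0 − x*‖²/(2μk). -/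
open RealInnerProductSpace Finset

section helpers

variable {E : Type*} [NormedAddCommGroup E] [InnerProductSpace ℝ E] [CompleteSpace E]

lemma hasDerivAt_line {f : E → ℝ} {G : E} {a v : E} {t : ℝ}
    (hf : HasGradientAt f G (a + t • v)) :
    HasDerivAt (fun s : ℝ => f (a + s • v)) ⟪G, v⟫ t := by
  have h1 : HasDerivAt (fun s : ℝ => a + s • v) v t := by
    simpa using ((hasDerivAt_id t).smul_const v).const_add a
  have h2 := hf.hasFDerivAt.comp_hasDerivAt t h1
  simp [InnerProductSpace.toDual_apply_apply] at h2
  exact h2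

lemma line_convex {f : E → ℝ} (hf : ConvexOn ℝ Set.univ f) (a v : E) :
    ConvexOn ℝ Set.univ (fun t : ℝ => f (a + t • v)) := by
  refine ⟨convex_univ, fun s _ t _ la lb hla hlb hs => ?_⟩
  have h1 : a + (la • s + lb • t) • v = la • (a + s • v) + lb • (a + t • v) := by
    rw [show la • (a + s • v) + lb • (a + t • v)
        = (la + lb) • a + (la • s + lb • t) • v by
      simp only [smul_eq_mul]; module, hs, one_smul]
  simp only [smul_eq_mul] at h1 ⊢
  rw [h1]
  exact hf.2 (Set.mem_univ _) (Set.mem_univ _) hla hlb hs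

lemma grad_ineq {f : E → ℝ} {g : E → E} (hf : ConvexOn ℝ Set.univ f)
    (hg : ∀ y, HasGradientAt f (g y) y) (a b : E) :
    f a + ⟪g a, b - a⟫ ≤ f b := by
  have hφconv : ConvexOn ℝ Set.univ (fun t : ℝ => f (a + t • (b - a))) :=
    line_convex hf a (b - a)
  have hder : HasDerivAt (fun t : ℝ => f (a + t • (b - a))) ⟪g a, b - a⟫ 0 :=
    hasDerivAt_line (by simpa using hg a)
  have h := hφconv.le_slope_of_hasDerivAt (Set.mem_univ (0:ℝ)) (Set.mem_univ (1:ℝ))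
    one_pos hder
  rw [slope_def_field] at h
  simp only [one_smul, zero_smul, add_zero, add_sub_cancel, sub_zero, div_one] at h
  linarith

lemma descent_lemma_s7 {f : E → ℝ} {g : E → E} (hg : ∀ y, HasGradientAt f (g y) y)
    {C : ℝ} (hl : ∀ y z, ‖g y - g z‖ ≤ C * ‖y - z‖) (a b : E) :
    f b ≤ f a + ⟪g a, b - a⟫ + C / 2 * ‖b - a‖ ^ 2 := by
  set v := b - a with hv
  set φ : ℝ → ℝ := fun t => f (a + t • v) - t * ⟪g a, v⟫ - C / 2 * ‖v‖ ^ 2 * t ^ 2 with hφ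
  have hder : ∀ t : ℝ, HasDerivAt φ
      (⟪g (a + t • v), v⟫ - ⟪g a, v⟫ - C / 2 * ‖v‖ ^ 2 * (2 * t)) t := by
    intro t
    have h1 : HasDerivAt (fun s : ℝ => f (a + s • v)) ⟪g (a + t • v), v⟫ t :=
      hasDerivAt_line (hg _)
    have h2 : HasDerivAt (fun s : ℝ => s * ⟪g a, v⟫) ⟪g a, v⟫ t := by
      simpa using (hasDerivAt_id t).mul_const ⟪g a, v⟫
    have h3 : HasDerivAt (fun s : ℝ => C / 2 * ‖v‖ ^ 2 * s ^ 2)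
        (C / 2 * ‖v‖ ^ 2 * (2 * t)) t := by
      have := (hasDerivAt_pow 2 t).const_mul (C / 2 * ‖v‖ ^ 2)
      simpa [pow_one, mul_comm, mul_assoc, mul_left_comm] using this
    exact (h1.sub h2).sub h3
  have hanti : AntitoneOn φ (Set.Icc 0 1) := by
    apply antitoneOn_of_deriv_nonpos (convex_Icc 0 1)
    · exact fun t _ => (hder t).continuousAt.continuousWithinAt
    · intro t _; exact (hder t).differentiableAt.differentiableWithinAt
    · intro t ht
      rw [interior_Icc] at ht
      rw [(hder t).deriv]
      have hCS : ⟪g (a + t • v) - g a, v⟫ ≤ ‖g (a + t • v) - g a‖ * ‖v‖ :=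
        real_inner_le_norm _ _
      have hdist : ‖(a + t • v) - a‖ = t * ‖v‖ := by
        simp [norm_smul, abs_of_nonneg ht.1.le]
      have hlb : ‖g (a + t • v) - g a‖ ≤ C * (t * ‖v‖) := by
        have := hl (a + t • v) a
        rwa [hdist] at this
      have hsub : ⟪g (a + t • v), v⟫ - ⟪g a, v⟫ = ⟪g (a + t • v) - g a, v⟫ := by
        rw [inner_sub_left]
      nlinarith [hCS, hlb, hsub, norm_nonneg v, norm_nonneg (g (a + t • v) - g a),
        mul_le_mul_of_nonneg_right hlb (norm_nonneg v)]
  have h01 : φ 1 ≤ φ 0 :=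
    hanti (Set.left_mem_Icc.mpr zero_le_one) (Set.right_mem_Icc.mpr zero_le_one) zero_le_one
  have e0 : φ 0 = f a := by simp [hφ]
  have e1 : φ 1 = f b - ⟪g a, v⟫ - C / 2 * ‖v‖ ^ 2 := by
    have hb : a + v = b := by rw [hv]; abel
    simp [hφ, hb]
  rw [e0, e1] at h01
  linarith

lemma convexOn_sqnorm : ConvexOn ℝ Set.univ (fun vv : E => ‖vv‖ ^ 2) := by
  refine ⟨convex_univ, fun p _ q _ la lb hla hlb hs => ?_⟩
  have hCS : ⟪p, q⟫ ≤ ‖p‖ * ‖q‖ := real_inner_le_norm p q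
  have hexp : ‖la • p + lb • q‖ ^ 2
      = la ^ 2 * ‖p‖ ^ 2 + 2 * (la * lb) * ⟪p, q⟫ + lb ^ 2 * ‖q‖ ^ 2 := by
    rw [norm_add_sq_real, real_inner_smul_left, real_inner_smul_right, norm_smul, norm_smul]
    simp [abs_of_nonneg hla, abs_of_nonneg hlb]
    ring
  simp only [smul_eq_mul]
  nlinarith [sq_nonneg (‖p‖ - ‖q‖), mul_nonneg hla hlb, norm_nonneg p, norm_nonneg q]

lemma convexOn_finset_sum {ι : Type*} (s : Finset ι) {f : ι → E → ℝ}
    (h : ∀ j ∈ s, ConvexOn ℝ Set.univ (f j)) :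
    ConvexOn ℝ Set.univ (fun u => ∑ j ∈ s, f j u) := by
  induction s using Finset.cons_induction with
  | empty => simpa using convexOn_const (0:ℝ) convex_univ
  | cons a s ha ih =>
    simp only [Finset.sum_cons]
    exact (h a (Finset.mem_cons_self a s)).add
      (ih fun j hj => h j (Finset.mem_cons_of_mem hj))

lemma convexOn_inner_affine (G b : E) (c : ℝ) :
    ConvexOn ℝ Set.univ (fun u : E => c + ⟪G, u - b⟫) := by
  refine ⟨convex_univ, fun p _ q _ la lb hla hlb hs => le_of_eq ?_⟩
  simp only [inner_sub_right, inner_add_right, real_inner_smul_right, smul_eq_mul]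
  linear_combination (⟪G, b⟫ - c) * hs

lemma sqnorm_combo {ι : Type*} (s : Finset ι) (d : ι → ℝ) (y : ι → E) (z : E)
    (hd : ∀ j ∈ s, 0 ≤ d j) (hs : ∑ j ∈ s, d j = 1) :
    ‖z - ∑ j ∈ s, d j • y j‖ ^ 2 ≤ ∑ j ∈ s, d j * ‖z - y j‖ ^ 2 := by
  have h1 : z - ∑ j ∈ s, d j • y j = ∑ j ∈ s, d j • (z - y j) := by
    simp only [smul_sub, Finset.sum_sub_distrib, ← Finset.sum_smul, hs, one_smul]
  rw [h1]
  have := convexOn_sqnorm.map_sum_le hd hs (fun j _ => Set.mem_univ (z - y j))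
  simpa using this

lemma min_strongly {R : E → ℝ} (hR : ConvexOn ℝ Set.univ R) {c : ℝ} (hc : 0 ≤ c)
    (w m : E) (hmin : ∀ u, R m + c * ‖m - w‖ ^ 2 ≤ R u + c * ‖u - w‖ ^ 2) (u : E) :
    R m + c * ‖m - w‖ ^ 2 + c * ‖u - m‖ ^ 2 ≤ R u + c * ‖u - w‖ ^ 2 := by
  have claim : R m ≤ R u + 2 * c * ⟪m - w, u - m⟫ := by
    refine le_of_forall_pos_le_add ?_
    intro ε hε
    set q := c * ‖u - m‖ ^ 2 with hq
    have hq0 : 0 ≤ q := mul_nonneg hc (sq_nonneg _)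
    set t := min 1 (ε / (q + 1)) with ht
    have ht0 : 0 < t := lt_min one_pos (div_pos hε (by linarith))
    have ht1 : t ≤ 1 := min_le_left _ _
    have hpt : (1 - t) • m + t • u = m + t • (u - m) := by module
    have hconvt : R (m + t • (u - m)) ≤ (1 - t) * R m + t * R u := by
      have := hR.2 (Set.mem_univ m) (Set.mem_univ u) (by linarith : (0:ℝ) ≤ 1 - t)
        ht0.le (by ring)
      rwa [hpt] at this
    have hnorm : ‖(m + t • (u - m)) - w‖ ^ 2
        = ‖m - w‖ ^ 2 + 2 * t * ⟪m - w, u - m⟫ + t ^ 2 * ‖u - m‖ ^ 2 := by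
      have h0 : (m + t • (u - m)) - w = (m - w) + t • (u - m) := by abel
      rw [h0, norm_add_sq_real, real_inner_smul_right, norm_smul]
      simp [abs_of_nonneg ht0.le]
      ring
    have h := hmin (m + t • (u - m))
    rw [hnorm] at h
    have h2 : t * R m ≤ t * (R u + 2 * c * ⟪m - w, u - m⟫ + q * t) := by
      rw [hq]; nlinarith [h, hconvt]
    have h3 : R m ≤ R u + 2 * c * ⟪m - w, u - m⟫ + q * t :=
      le_of_mul_le_mul_left h2 ht0
    have h5 : q * t ≤ ε := by
      have h6 : q * t ≤ q * (ε / (q + 1)) :=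
        mul_le_mul_of_nonneg_left (min_le_right _ _) hq0
      have h7 : q * (ε / (q + 1)) ≤ ε := by
        rw [mul_div_assoc']
        rw [div_le_iff₀ (by linarith : (0:ℝ) < q + 1)]
        nlinarith
      linarith
    linarith
  have hexp : ‖u - w‖ ^ 2 = ‖u - m‖ ^ 2 + 2 * ⟪u - m, m - w⟫ + ‖m - w‖ ^ 2 := by
    have h0 : u - w = (u - m) + (m - w) := by abel
    rw [h0, norm_add_sq_real]
  have hsym : ⟪m - w, u - m⟫ = ⟪u - m, m - w⟫ := real_inner_comm _ _
  rw [hsym] at claim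
  nlinarith [claim, hexp]

end helpers

theorem MSA_convergence_rate (n K : ℕ) (hK : 0 < K)
    (f : Fin K → EuclideanSpace ℝ (Fin n) → ℝ)
    (g : Fin K → EuclideanSpace ℝ (Fin n) → EuclideanSpace ℝ (Fin n))
    (L : Fin K → ℝ) (μ : ℝ)
    (x : ℕ → Fin K → EuclideanSpace ℝ (Fin n))
    (w : ℕ → Fin K → EuclideanSpace ℝ (Fin n))
    (D : ℕ → Fin K → Fin K → ℝ)
    (x0 xstar : EuclideanSpace ℝ (Fin n))
    (hconv : ∀ j, ConvexOn ℝ Set.univ (f j))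
    (hgrad : ∀ j y, HasGradientAt (f j) (g j y) y)
    (hlip : ∀ j y z, ‖g j y - g j z‖ ≤ L j * ‖y - z‖)
    (hμ0 : 0 < μ)
    (hμ : μ ≤ 1 / (Finset.univ.sup' (Finset.univ_nonempty_iff.mpr ⟨⟨0, hK⟩⟩) L))
    (hxstar : ∀ y, (∑ j, f j xstar) ≤ ∑ j, f j y)
    (hw0 : ∀ i, w 0 i = x0)
    (hDnn : ∀ k i j, 0 ≤ D k i j)
    (hDrow : ∀ k i, ∑ j, D k i j = 1)
    (hDcol : ∀ k j, ∑ i, D k i j = 1)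
    (hx : ∀ k i u, f i (x (k + 1) i) + ∑ j ∈ Finset.univ.erase i,
          (f j (w k i) + ⟪g j (w k i), x (k + 1) i - w k i⟫ +
            (1 / (2 * μ)) * ‖x (k + 1) i - w k i‖ ^ 2)
        ≤ f i u + ∑ j ∈ Finset.univ.erase i,
          (f j (w k i) + ⟪g j (w k i), u - w k i⟫ + (1 / (2 * μ)) * ‖u - w k i‖ ^ 2))
    (hwupd : ∀ k i, w (k + 1) i = ∑ j, D (k + 1) j i • x (k + 1) j) :
    ∀ k ≥ 1, Finset.univ.inf' (Finset.univ_nonempty_iff.mpr ⟨⟨0, hK⟩⟩)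
        (fun i => ∑ j, f j (x k i)) - (∑ j, f j xstar)
      ≤ ((K : ℝ) - 1) * ‖x0 - xstar‖ ^ 2 / (2 * μ * k) := by
  set M := Finset.univ.sup' (Finset.univ_nonempty_iff.mpr ⟨⟨0, hK⟩⟩) L with hM
  -- Lipschitz constants are at most 1/μ
  have hMpos : 0 < M := by
    by_contra hMn
    push_neg at hMn
    have h1 : (1:ℝ) / M ≤ 0 := by
      rcases hMn.lt_or_eq with h | h
      · exact (one_div_neg.mpr h).le
      · simp [h]
    linarith
  have hLle : ∀ j, L j ≤ 1 / μ := by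
    intro j
    have h1 : μ * M ≤ 1 := (le_div_iff₀ hMpos).mp hμ
    have h2 : M ≤ 1 / μ := (le_div_iff₀ hμ0).mpr (by nlinarith)
    exact le_trans (Finset.le_sup' L (Finset.mem_univ j)) h2
  have hlip' : ∀ j (y z : EuclideanSpace ℝ (Fin n)), ‖g j y - g j z‖ ≤ (1/μ) * ‖y - z‖ := by
    intro j y z
    exact le_trans (hlip j y z) (mul_le_mul_of_nonneg_right (hLle j) (norm_nonneg _))
  set c : ℝ := ((K : ℝ) - 1) / (2 * μ) with hcdef
  have hK1 : (1:ℝ) ≤ (K:ℝ) := by exact_mod_cast hK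
  have hc : 0 ≤ c := div_nonneg (by linarith) (by linarith)
  -- key inequality
  have key : ∀ k i u, (∑ j, f j (x (k+1) i)) + c * ‖u - x (k+1) i‖ ^ 2
      ≤ (∑ j, f j u) + c * ‖u - w k i‖ ^ 2 := by
    intro k i u
    set m := x (k+1) i with hm
    set wi := w k i with hwi
    have hsumconst : ∀ v : EuclideanSpace ℝ (Fin n),
        (∑ _j ∈ Finset.univ.erase i, (1/(2*μ)) * ‖v - wi‖ ^ 2) = c * ‖v - wi‖ ^ 2 := by
      intro v
      rw [Finset.sum_const, Finset.card_erase_of_mem (Finset.mem_univ i),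
        Finset.card_univ, Fintype.card_fin, nsmul_eq_mul, Nat.cast_sub hK]
      push_cast
      rw [hcdef]
      field_simp
    set Rf : EuclideanSpace ℝ (Fin n) → ℝ :=
      fun u' => f i u' + ∑ j ∈ Finset.univ.erase i, (f j wi + ⟪g j wi, u' - wi⟫) with hRf
    have hRconv : ConvexOn ℝ Set.univ Rf := by
      exact (hconv i).add (convexOn_finset_sum _
        (fun j _ => convexOn_inner_affine (g j wi) wi (f j wi)))
    have esum : ∀ u' : EuclideanSpace ℝ (Fin n),
        (∑ j ∈ Finset.univ.erase i,
          (f j wi + ⟪g j wi, u' - wi⟫ + (1/(2*μ)) * ‖u' - wi‖ ^ 2))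
        = (∑ j ∈ Finset.univ.erase i, (f j wi + ⟪g j wi, u' - wi⟫)) + c * ‖u' - wi‖ ^ 2 := by
      intro u'
      rw [Finset.sum_add_distrib, hsumconst]
    have hmin : ∀ v, Rf m + c * ‖m - wi‖ ^ 2 ≤ Rf v + c * ‖v - wi‖ ^ 2 := by
      intro v
      have h := hx k i v
      rw [esum m, esum v] at h
      simp only [hRf]
      linarith
    have hstr := min_strongly hRconv hc wi m hmin u
    have hFm : (∑ j, f j m) ≤ Rf m + c * ‖m - wi‖ ^ 2 := by
      have hsplit : (∑ j, f j m) = f i m + ∑ j ∈ Finset.univ.erase i, f j m :=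
        (Finset.add_sum_erase _ _ (Finset.mem_univ i)).symm
      have hdesc : ∀ j ∈ Finset.univ.erase i,
          f j m ≤ f j wi + ⟪g j wi, m - wi⟫ + (1/(2*μ)) * ‖m - wi‖ ^ 2 := by
        intro j _
        have := descent_lemma_s7 (hgrad j) (hlip' j) wi m
        have e : (1/μ)/2 = 1/(2*μ) := by ring
        rwa [e] at this
      have hsum := Finset.sum_le_sum hdesc
      rw [esum m] at hsum
      rw [hsplit]
      simp only [hRf]
      linarith
    have hRu : Rf u ≤ ∑ j, f j u := by
      have hgi : ∀ j ∈ Finset.univ.erase i, f j wi + ⟪g j wi, u - wi⟫ ≤ f j u := by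
        intro j _
        exact grad_ineq (hconv j) (fun y => hgrad j y) wi u
      have hsum := Finset.sum_le_sum hgi
      have hsplit : (∑ j, f j u) = f i u + ∑ j ∈ Finset.univ.erase i, f j u :=
        (Finset.add_sum_erase _ _ (Finset.mem_univ i)).symm
      rw [hsplit]
      simp only [hRf]
      linarith
    linarith
  -- mixing inequality for squared norms
  have hmix : ∀ k : ℕ, (∑ i, ‖xstar - w (k+1) i‖ ^ 2) ≤ ∑ i, ‖xstar - x (k+1) i‖ ^ 2 := by
    intro k
    have h1 : ∀ i, ‖xstar - w (k+1) i‖ ^ 2 ≤ ∑ j, D (k+1) j i * ‖xstar - x (k+1) j‖ ^ 2 := by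
      intro i
      rw [hwupd k i]
      exact sqnorm_combo Finset.univ (fun j => D (k+1) j i) (x (k+1)) xstar
        (fun j _ => hDnn _ _ _) (hDcol (k+1) i)
    calc (∑ i, ‖xstar - w (k+1) i‖ ^ 2)
        ≤ ∑ i, ∑ j, D (k+1) j i * ‖xstar - x (k+1) j‖ ^ 2 :=
          Finset.sum_le_sum (fun i _ => h1 i)
      _ = ∑ j, (∑ i, D (k+1) j i) * ‖xstar - x (k+1) j‖ ^ 2 := by
          rw [Finset.sum_comm]
          simp [Finset.sum_mul]
      _ = ∑ j, ‖xstar - x (k+1) j‖ ^ 2 := by simp [hDrow]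
  -- F is convex
  have hFconv : ConvexOn ℝ Set.univ (fun u => ∑ j, f j u) :=
    convexOn_finset_sum Finset.univ (fun j _ => hconv j)
  -- F-mixing
  have hFmix : ∀ k i, (∑ j, f j (w (k+1) i)) ≤ ∑ p, D (k+1) p i * (∑ j, f j (x (k+1) p)) := by
    intro k i
    rw [hwupd k i]
    have := hFconv.map_sum_le (t := Finset.univ) (w := fun p => D (k+1) p i)
      (p := x (k+1)) (fun p _ => hDnn _ _ _) (hDcol (k+1) i)
      (fun p _ => Set.mem_univ _)
    simpa using this
  -- one-step decrease of the sum
  have hmono : ∀ k : ℕ, (∑ i, (∑ j, f j (x (k+2) i))) ≤ ∑ i, (∑ j, f j (x (k+1) i)) := by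
    intro k
    have h1 : ∀ i : Fin K, (∑ j, f j (x (k+2) i)) ≤ ∑ j, f j (w (k+1) i) := by
      intro i
      have h := key (k+1) i (w (k+1) i)
      have h0 : ‖w (k+1) i - w (k+1) i‖ ^ 2 = 0 := by simp
      nlinarith [sq_nonneg ‖w (k+1) i - x (k+2) i‖, mul_nonneg hc (sq_nonneg ‖w (k+1) i - x (k+2) i‖)]
    calc (∑ i, (∑ j, f j (x (k+2) i)))
        ≤ ∑ i, (∑ j, f j (w (k+1) i)) := Finset.sum_le_sum (fun i _ => h1 i)
      _ ≤ ∑ i, ∑ p, D (k+1) p i * (∑ j, f j (x (k+1) p)) :=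
          Finset.sum_le_sum (fun i _ => hFmix k i)
      _ = ∑ p, (∑ i, D (k+1) p i) * (∑ j, f j (x (k+1) p)) := by
          rw [Finset.sum_comm]
          simp [Finset.sum_mul]
      _ = ∑ i, (∑ j, f j (x (k+1) i)) := by simp [hDrow]
  -- one-step bound
  have hstep : ∀ k : ℕ, (∑ i, (∑ j, f j (x (k+1) i))) + c * (∑ i, ‖xstar - w (k+1) i‖ ^ 2)
      ≤ (K:ℝ) * (∑ j, f j xstar) + c * (∑ i, ‖xstar - w k i‖ ^ 2) := by
    intro k
    have h2 : (∑ i, ((∑ j, f j (x (k+1) i)) + c * ‖xstar - x (k+1) i‖ ^ 2))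
        ≤ ∑ _i : Fin K, ((∑ j, f j xstar) + c * ‖xstar - w k _i‖ ^ 2) :=
      Finset.sum_le_sum (fun i _ => key k i xstar)
    rw [Finset.sum_add_distrib, Finset.sum_add_distrib, Finset.sum_const,
      Finset.card_univ, Fintype.card_fin, nsmul_eq_mul, ← Finset.mul_sum, ← Finset.mul_sum] at h2
    have h3 := mul_le_mul_of_nonneg_left (hmix k) hc
    linarith
  -- telescoping
  have htel : ∀ m : ℕ, (∑ k ∈ Finset.range m, (∑ i, (∑ j, f j (x (k+1) i))))
      + c * (∑ i, ‖xstar - w m i‖ ^ 2)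
      ≤ (m:ℝ) * ((K:ℝ) * (∑ j, f j xstar)) + c * (∑ i, ‖xstar - w 0 i‖ ^ 2) := by
    intro m
    induction m with
    | zero => simp
    | succ m ih =>
      rw [Finset.sum_range_succ]
      push_cast
      have := hstep m
      linarith
  have hs0 : (∑ i, ‖xstar - w 0 i‖ ^ 2) = (K:ℝ) * ‖x0 - xstar‖ ^ 2 := by
    simp [hw0, norm_sub_rev xstar x0, Finset.sum_const, Finset.card_univ, nsmul_eq_mul]
  -- monotonicity from index 1 on
  have hmono2 : ∀ k m : ℕ, 1 ≤ k → k ≤ m →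
      (∑ i, (∑ j, f j (x m i))) ≤ ∑ i, (∑ j, f j (x k i)) := by
    intro k m hk hkm
    induction m, hkm using Nat.le_induction with
    | base => exact le_refl _
    | succ m hm ih =>
      obtain ⟨p, rfl⟩ := Nat.exists_eq_add_of_le (le_trans hk hm)
      have h2 : (∑ i, (∑ j, f j (x (1+p+1) i))) ≤ ∑ i, (∑ j, f j (x (1+p) i)) := by
        have h3 := hmono p
        rwa [show p+2 = 1+p+1 by omega, show p+1 = 1+p by omega] at h3
      exact le_trans h2 ih
  intro m hm
  set Fstar := ∑ j, f j xstar with hFstar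
  set am := ∑ i, (∑ j, f j (x m i)) with ham
  set X := ‖x0 - xstar‖ ^ 2 with hX
  have hm' : (0:ℝ) < m := by exact_mod_cast hm
  have hKr : (0:ℝ) < K := by exact_mod_cast hK
  -- sum over range m of a_{k+1} is at least m * a_m
  have hlow : (m:ℝ) * am ≤ ∑ k ∈ Finset.range m, (∑ i, (∑ j, f j (x (k+1) i))) := by
    have h1 : ∀ k ∈ Finset.range m, am ≤ ∑ i, (∑ j, f j (x (k+1) i)) := by
      intro k hkmem
      exact hmono2 (k+1) m (Nat.succ_le_succ (Nat.zero_le k))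
        (Nat.succ_le_of_lt (Finset.mem_range.mp hkmem))
    have := Finset.card_nsmul_le_sum (Finset.range m) _ am h1
    rwa [Finset.card_range, nsmul_eq_mul] at this
  have hsnn : 0 ≤ ∑ i, ‖xstar - w m i‖ ^ 2 :=
    Finset.sum_nonneg (fun i _ => sq_nonneg _)
  have hbig : (m:ℝ) * am ≤ (m:ℝ) * ((K:ℝ) * Fstar) + c * ((K:ℝ) * X) := by
    have h1 := htel m
    rw [hs0] at h1
    nlinarith [mul_nonneg hc hsnn]
  -- relate inf' to am
  set I := Finset.univ.inf' (Finset.univ_nonempty_iff.mpr ⟨⟨0, hK⟩⟩)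
    (fun i => ∑ j, f j (x m i)) with hI
  have hinf : (K:ℝ) * I ≤ am := by
    have h1 : ∀ i ∈ (Finset.univ : Finset (Fin K)), I ≤ ∑ j, f j (x m i) := by
      intro i _
      exact Finset.inf'_le _ (Finset.mem_univ i)
    have := Finset.card_nsmul_le_sum Finset.univ _ I h1
    rwa [Finset.card_univ, Fintype.card_fin, nsmul_eq_mul] at this
  -- conclude
  have hgoal : I - Fstar ≤ c * X / m := by
    have h2 : (m:ℝ) * ((K:ℝ) * I) ≤ (m:ℝ) * ((K:ℝ) * Fstar) + c * ((K:ℝ) * X) := by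
      have h3 := mul_le_mul_of_nonneg_left hinf (le_of_lt hm')
      linarith
    rw [le_div_iff₀ hm']
    nlinarith [h2, hKr]
  have heq : c * X / m = ((K:ℝ) - 1) * X / (2 * μ * m) := by
    rw [hcdef]
    field_simp
  rw [heq] at hgoal
  exact hgoal
end

section
/- (Convergence rate of FaMSA) Under the FaMSA iteration with μ ≤ 1/max_i L(f_i) and initialization x_0 = x_{(0)}^i = ŵ_{(0)}^i = w_{(1)}^i, for all k ≥ 1, min_i F(x_{(k)}^i) − F(x*) ≤ 2(K−1)‖x_0 − x*‖²/(μ(k+1)²). -/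
open RealInnerProductSpace Finset Filter Topology

section FamsaAux

variable {E : Type*} [NormedAddCommGroup E] [InnerProductSpace ℝ E] [CompleteSpace E]

lemma famsa_hasDerivAt_line {f : E → ℝ} {g : E → E} (hg : ∀ y, HasGradientAt f (g y) y)
    (w d : E) (t : ℝ) :
    HasDerivAt (fun s : ℝ => f (w + s • d)) ⟪g (w + t • d), d⟫ t := by
  have hc : HasDerivAt (fun s : ℝ => w + s • d) d t := by
    simpa using ((hasDerivAt_id t).smul_const d).const_add w
  have hf := (hg (w + t • d)).hasFDerivAt
  have := hf.comp_hasDerivAt t hc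
  simp only [InnerProductSpace.toDual_apply_apply] at this
  exact this

omit [CompleteSpace E] in
lemma famsa_norm_combo (x y : E) (a : ℝ) :
    ‖(1 - a) • x + a • y‖ ^ 2
      = (1 - a) * ‖x‖ ^ 2 + a * ‖y‖ ^ 2 - a * (1 - a) * ‖x - y‖ ^ 2 := by
  have h1 := real_inner_add_add_self ((1 - a) • x) (a • y)
  have h2 := norm_sub_sq_real x y
  have e1 : ⟪(1 - a) • x, (1 - a) • x⟫ = (1 - a) * ((1 - a) * ⟪x, x⟫) := by
    rw [real_inner_smul_left, real_inner_smul_right]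
  have e2 : ⟪(1 - a) • x, a • y⟫ = (1 - a) * (a * ⟪x, y⟫) := by
    rw [real_inner_smul_left, real_inner_smul_right]
  have e3 : ⟪a • y, a • y⟫ = a * (a * ⟪y, y⟫) := by
    rw [real_inner_smul_left, real_inner_smul_right]
  have hx : ⟪x, x⟫ = ‖x‖ ^ 2 := real_inner_self_eq_norm_sq x
  have hy : ⟪y, y⟫ = ‖y‖ ^ 2 := real_inner_self_eq_norm_sq y
  have hs : ⟪(1 - a) • x + a • y, (1 - a) • x + a • y⟫ = ‖(1 - a) • x + a • y‖ ^ 2 :=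
    real_inner_self_eq_norm_sq _
  rw [e1, e2, e3, hx, hy, hs] at h1
  linear_combination h1 + a * (1 - a) * h2

/-- Subgradient inequality for a differentiable convex function. -/
lemma famsa_grad_ineq {f : E → ℝ} {g : E → E} (hf : ConvexOn ℝ Set.univ f)
    (hg : ∀ y, HasGradientAt f (g y) y) (w u : E) :
    f w + ⟪g w, u - w⟫ ≤ f u := by
  set d := u - w with hd
  have hder : HasDerivAt (fun s : ℝ => f (w + s • d)) ⟪g w, d⟫ 0 := by
    simpa using famsa_hasDerivAt_line hg w d 0
  have hslope : Tendsto (slope (fun s : ℝ => f (w + s • d)) 0) (𝓝[≠] (0:ℝ)) (𝓝 ⟪g w, d⟫) :=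
    hasDerivAt_iff_tendsto_slope.1 hder
  have hslope' : Tendsto (slope (fun s : ℝ => f (w + s • d)) 0) (𝓝[>] (0:ℝ)) (𝓝 ⟪g w, d⟫) :=
    hslope.mono_left (nhdsWithin_mono _ (fun y hy => ne_of_gt hy))
  have hbound : ∀ᶠ a in 𝓝[>] (0:ℝ), slope (fun s : ℝ => f (w + s • d)) 0 a ≤ f u - f w := by
    filter_upwards [Ioo_mem_nhdsGT_of_mem (Set.left_mem_Ico.2 one_pos)] with a ha
    obtain ⟨ha0, ha1⟩ := ha
    have hcvx := hf.2 (Set.mem_univ w) (Set.mem_univ u) (by linarith : (0:ℝ) ≤ 1 - a)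
      (le_of_lt ha0) (by ring)
    have hpt : w + a • d = (1 - a) • w + a • u := by
      rw [hd]; module
    have key : f (w + a • d) - f (w + (0:ℝ) • d) ≤ (f u - f w) * a := by
      calc f (w + a • d) - f (w + (0:ℝ) • d) = f ((1-a) • w + a • u) - f w := by
            rw [hpt]; simp
        _ ≤ (1 - a) * f w + a * f u - f w := by
            have := hcvx; rw [smul_eq_mul, smul_eq_mul] at this; linarith
        _ = (f u - f w) * a := by ring
    rw [slope_def_field, sub_zero, div_le_iff₀ ha0]
    simpa using key
  have := le_of_tendsto hslope' hbound
  linarith [this]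

/-- Descent lemma for a function with Lipschitz gradient. -/
lemma famsa_descent {f : E → ℝ} {g : E → E} {Lc : ℝ}
    (hg : ∀ y, HasGradientAt f (g y) y)
    (hlip : ∀ y z, ‖g y - g z‖ ≤ Lc * ‖y - z‖) (w x : E) :
    f x ≤ f w + ⟪g w, x - w⟫ + Lc / 2 * ‖x - w‖ ^ 2 := by
  set d := x - w with hd
  set ψ : ℝ → ℝ := fun s => Lc / 2 * ‖d‖ ^ 2 * s ^ 2 - f (w + s • d) + f w + s * ⟪g w, d⟫
    with hψ
  have hψd : ∀ s : ℝ, HasDerivAt ψ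
      (Lc * ‖d‖ ^ 2 * s - ⟪g (w + s • d), d⟫ + ⟪g w, d⟫) s := by
    intro s
    have h1 : HasDerivAt (fun s : ℝ => Lc / 2 * ‖d‖ ^ 2 * s ^ 2) (Lc / 2 * ‖d‖ ^ 2 * (2 * s)) s := by
      simpa using ((hasDerivAt_pow 2 s).const_mul (Lc / 2 * ‖d‖ ^ 2))
    have h2 := famsa_hasDerivAt_line hg w d s
    have h3 : HasDerivAt (fun s : ℝ => s * ⟪g w, d⟫) ⟪g w, d⟫ s := by
      simpa using (hasDerivAt_id s).mul_const ⟪g w, d⟫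
    have := ((h1.sub h2).add_const (f w)).add h3
    exact this.congr_deriv (by ring)
  have hmono : MonotoneOn ψ (Set.Icc (0:ℝ) 1) := by
    apply monotoneOn_of_deriv_nonneg (convex_Icc 0 1)
    · exact fun s _ => (hψd s).continuousAt.continuousWithinAt
    · exact fun s _ => ((hψd s).differentiableAt).differentiableWithinAt
    · intro s hs
      rw [interior_Icc] at hs
      rw [(hψd s).deriv]
      have hcs : ⟪g (w + s • d) - g w, d⟫ ≤ ‖g (w + s • d) - g w‖ * ‖d‖ :=
        real_inner_le_norm _ _
      have hl : ‖g (w + s • d) - g w‖ ≤ Lc * ‖s • d‖ := by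
        simpa using hlip (w + s • d) w
      have hns : ‖s • d‖ = s * ‖d‖ := by
        rw [norm_smul, Real.norm_eq_abs, abs_of_pos hs.1]
      have hinner : ⟪g (w + s • d) - g w, d⟫ = ⟪g (w + s • d), d⟫ - ⟪g w, d⟫ :=
        inner_sub_left _ _ _
      rw [hns] at hl
      nlinarith [mul_le_mul_of_nonneg_right hl (norm_nonneg d)]
  have h01 := hmono (Set.left_mem_Icc.2 zero_le_one) (Set.right_mem_Icc.2 zero_le_one) zero_le_one
  have hψ0 : ψ 0 = 0 := by simp [hψ]
  have hψ1 : ψ 1 = Lc / 2 * ‖d‖ ^ 2 - f x + f w + ⟪g w, d⟫ := by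
    simp [hψ, hd]
  rw [hψ0, hψ1] at h01
  linarith

/-- Key inequality for the FaMSA surrogate minimization step. -/
lemma famsa_key {K : ℕ} {f : Fin K → E → ℝ} {g : Fin K → E → E} {μ : ℝ}
    (hμ0 : 0 < μ) (i : Fin K) (wv xv : E)
    (hconvi : ConvexOn ℝ Set.univ (f i))
    (hdesc : ∀ j : Fin K, f j xv ≤ f j wv + ⟪g j wv, xv - wv⟫ + 1 / (2 * μ) * ‖xv - wv‖ ^ 2)
    (hsub : ∀ (j : Fin K) (u : E), f j wv + ⟪g j wv, u - wv⟫ ≤ f j u)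
    (hmin : ∀ u, f i xv + ∑ j ∈ Finset.univ.erase i,
          (f j wv + ⟪g j wv, xv - wv⟫ + (1 / (2 * μ)) * ‖xv - wv‖ ^ 2)
        ≤ f i u + ∑ j ∈ Finset.univ.erase i,
          (f j wv + ⟪g j wv, u - wv⟫ + (1 / (2 * μ)) * ‖u - wv‖ ^ 2)) :
    ∀ u, ∑ j, f j xv ≤ ∑ j, f j u
        + ((K : ℝ) - 1) / μ / 2 * (‖u - wv‖ ^ 2 - ‖u - xv‖ ^ 2) := by
  intro u
  set c : ℝ := 1 / (2 * μ) with hc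
  have hc0 : 0 < c := by positivity
  have hKpos : 0 < K := i.pos
  have hcard : ((Finset.univ.erase i).card : ℝ) = (K : ℝ) - 1 := by
    rw [Finset.card_erase_of_mem (Finset.mem_univ i), Finset.card_univ, Fintype.card_fin]
    push_cast [Nat.cast_sub hKpos]
    ring
  set σ2 : ℝ := ((K : ℝ) - 1) * c with hσ2
  have hσ2nn : 0 ≤ σ2 := by
    apply mul_nonneg _ hc0.le
    have : (1 : ℝ) ≤ (K : ℝ) := by exact_mod_cast hKpos
    linarith
  set T : E → ℝ := fun v => ∑ j ∈ Finset.univ.erase i,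
      (f j wv + ⟪g j wv, v - wv⟫ + c * ‖v - wv‖ ^ 2) with hT
  set Q : E → ℝ := fun v => f i v + T v with hQ
  have hstrong : Q xv + σ2 * ‖u - xv‖ ^ 2 ≤ Q u := by
    have hstep : ∀ a : ℝ, 0 < a → a < 1 → σ2 * (1 - a) * ‖xv - u‖ ^ 2 ≤ Q u - Q xv := by
      intro a ha0 ha1
      set ua : E := (1 - a) • xv + a • u with huadef
      have hua : ua - wv = (1 - a) • (xv - wv) + a • (u - wv) := by
        rw [huadef]; module
      have hxu : (xv - wv) - (u - wv) = xv - u := by abel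
      have hterm : ∀ j : Fin K,
          f j wv + ⟪g j wv, ua - wv⟫ + c * ‖ua - wv‖ ^ 2
            = (1 - a) * (f j wv + ⟪g j wv, xv - wv⟫ + c * ‖xv - wv‖ ^ 2)
              + a * (f j wv + ⟪g j wv, u - wv⟫ + c * ‖u - wv‖ ^ 2)
              - c * (a * (1 - a) * ‖xv - u‖ ^ 2) := by
        intro j
        rw [hua, inner_add_right, real_inner_smul_right, real_inner_smul_right,
          famsa_norm_combo, hxu]
        ring
      have hTa : T ua = (1 - a) * T xv + a * T u - σ2 * (a * (1 - a) * ‖xv - u‖ ^ 2) := by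
        rw [hT]
        simp only []
        rw [Finset.sum_congr rfl (fun j _ => hterm j), Finset.sum_sub_distrib,
          Finset.sum_add_distrib, ← Finset.mul_sum, ← Finset.mul_sum, Finset.sum_const,
          nsmul_eq_mul, hcard, hσ2]
        ring
      have hfa : f i ua ≤ (1 - a) * f i xv + a * f i u := by
        have := hconvi.2 (Set.mem_univ xv) (Set.mem_univ u)
          (by linarith : (0:ℝ) ≤ 1 - a) ha0.le (by ring)
        simpa [smul_eq_mul] using this
      have hQxv : Q xv ≤ Q ua := hmin ua
      have : Q ua ≤ (1 - a) * Q xv + a * Q u - σ2 * (a * (1 - a) * ‖xv - u‖ ^ 2) := by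
        rw [hQ]; simp only []
        rw [hTa]
        nlinarith [hfa]
      have h2 : σ2 * (a * (1 - a) * ‖xv - u‖ ^ 2) ≤ a * (Q u - Q xv) := by nlinarith
      have := (mul_le_mul_iff_right₀ ha0).1
        (by nlinarith : a * (σ2 * (1 - a) * ‖xv - u‖ ^ 2) ≤ a * (Q u - Q xv))
      linarith
    have hfinal : σ2 * ‖xv - u‖ ^ 2 ≤ Q u - Q xv := by
      apply le_of_forall_sub_le
      intro ε hε
      set a : ℝ := min (1/2) (ε / (σ2 * ‖xv - u‖ ^ 2 + 1)) with ha
      have hden : 0 < σ2 * ‖xv - u‖ ^ 2 + 1 := by positivity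
      have ha0 : 0 < a := lt_min (by norm_num) (div_pos hε hden)
      have ha1 : a < 1 := lt_of_le_of_lt (min_le_left _ _) (by norm_num)
      have hsmall : a * (σ2 * ‖xv - u‖ ^ 2) ≤ ε := by
        have h1 : a ≤ ε / (σ2 * ‖xv - u‖ ^ 2 + 1) := min_le_right _ _
        have h2 : a * (σ2 * ‖xv - u‖ ^ 2) ≤ (ε / (σ2 * ‖xv - u‖ ^ 2 + 1)) * (σ2 * ‖xv - u‖ ^ 2) :=
          mul_le_mul_of_nonneg_right h1 (by positivity)
        have h3 : (ε / (σ2 * ‖xv - u‖ ^ 2 + 1)) * (σ2 * ‖xv - u‖ ^ 2) ≤ ε := by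
          rw [div_mul_eq_mul_div, div_le_iff₀ hden]
          nlinarith
        linarith
      have := hstep a ha0 ha1
      nlinarith
    have hrev : ‖xv - u‖ = ‖u - xv‖ := norm_sub_rev _ _
    rw [hrev] at hfinal
    linarith
  have hFQ : ∑ j, f j xv ≤ Q xv := by
    rw [hQ, hT]; simp only []
    rw [← Finset.add_sum_erase Finset.univ (fun j => f j xv) (Finset.mem_univ i)]
    have hs : ∑ j ∈ Finset.univ.erase i, f j xv
        ≤ ∑ j ∈ Finset.univ.erase i, (f j wv + ⟪g j wv, xv - wv⟫ + c * ‖xv - wv‖ ^ 2) :=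
      Finset.sum_le_sum (fun j _ => hdesc j)
    linarith
  have hQF : Q u ≤ ∑ j, f j u + σ2 * ‖u - wv‖ ^ 2 := by
    rw [hQ, hT]; simp only []
    rw [← Finset.add_sum_erase Finset.univ (fun j => f j u) (Finset.mem_univ i)]
    have h1 : ∑ j ∈ Finset.univ.erase i, (f j wv + ⟪g j wv, u - wv⟫ + c * ‖u - wv‖ ^ 2)
        ≤ ∑ j ∈ Finset.univ.erase i, (f j u + c * ‖u - wv‖ ^ 2) :=
      Finset.sum_le_sum (fun j _ => by linarith [hsub j u])
    have h2 : ∑ j ∈ Finset.univ.erase i, (f j u + c * ‖u - wv‖ ^ 2)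
        = (∑ j ∈ Finset.univ.erase i, f j u) + σ2 * ‖u - wv‖ ^ 2 := by
      rw [Finset.sum_add_distrib, Finset.sum_const, nsmul_eq_mul, hcard, hσ2]
      ring
    linarith
  have hσeq : ((K : ℝ) - 1) / μ / 2 = σ2 := by
    rw [hσ2, hc]; field_simp
  rw [hσeq]
  linarith

end FamsaAux

set_option maxHeartbeats 2000000 in
theorem FaMSA_convergence_rate (n K : ℕ) (hK : 0 < K)
    (f : Fin K → EuclideanSpace ℝ (Fin n) → ℝ)
    (g : Fin K → EuclideanSpace ℝ (Fin n) → EuclideanSpace ℝ (Fin n))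
    (L : Fin K → ℝ) (μ : ℝ) (t : ℕ → ℝ)
    (x w what : ℕ → Fin K → EuclideanSpace ℝ (Fin n))
    (D : ℕ → Fin K → Fin K → ℝ)
    (x0 xstar : EuclideanSpace ℝ (Fin n))
    (hconv : ∀ j, ConvexOn ℝ Set.univ (f j))
    (hgrad : ∀ j y, HasGradientAt (f j) (g j y) y)
    (hlip : ∀ j y z, ‖g j y - g j z‖ ≤ L j * ‖y - z‖)
    (hμ0 : 0 < μ)
    (hμ : μ ≤ 1 / (Finset.univ.sup' (Finset.univ_nonempty_iff.mpr ⟨⟨0, hK⟩⟩) L))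
    (hxstar : ∀ y, (∑ j, f j xstar) ≤ ∑ j, f j y)
    (hinit : ∀ i, x 0 i = x0 ∧ what 0 i = x0 ∧ w 1 i = x0)
    (ht1 : t 1 = 1)
    (htrec : ∀ k ≥ 1, t (k + 1) = (1 + Real.sqrt (1 + 4 * t k ^ 2)) / 2)
    (hDnn : ∀ k i j, 0 ≤ D k i j)
    (hDrow : ∀ k i, ∑ j, D k i j = 1)
    (hDcol : ∀ k j, ∑ i, D k i j = 1)
    (hx : ∀ k ≥ 1, ∀ i, ∀ u, f i (x k i) + ∑ j ∈ Finset.univ.erase i,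
          (f j (w k i) + ⟪g j (w k i), x k i - w k i⟫ +
            (1 / (2 * μ)) * ‖x k i - w k i‖ ^ 2)
        ≤ f i u + ∑ j ∈ Finset.univ.erase i,
          (f j (w k i) + ⟪g j (w k i), u - w k i⟫ + (1 / (2 * μ)) * ‖u - w k i‖ ^ 2))
    (hwhat : ∀ k ≥ 1, ∀ i, what k i = ∑ j, D k j i • x k j)
    (hwupd : ∀ k ≥ 1, ∀ i, w (k + 1) i = what k i +
        (1 / t (k + 1)) • (t k • (x k i - what (k - 1) i) - (what k i - what (k - 1) i))) :
    ∀ k ≥ 1, Finset.univ.inf' (Finset.univ_nonempty_iff.mpr ⟨⟨0, hK⟩⟩)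
        (fun i => ∑ j, f j (x k i)) - (∑ j, f j xstar)
      ≤ 2 * ((K : ℝ) - 1) * ‖x0 - xstar‖ ^ 2 / (μ * ((k : ℝ) + 1) ^ 2) := by
  classical
  have hK1 : (1:ℝ) ≤ (K:ℝ) := by exact_mod_cast hK
  -- Lipschitz constants bounded by 1/μ
  have hM : ∀ j, L j ≤ 1 / μ := by
    set M := Finset.univ.sup' (Finset.univ_nonempty_iff.mpr ⟨⟨0, hK⟩⟩) L with hMdef
    have hM0 : 0 < M := by
      by_contra h
      push_neg at h
      rcases lt_or_eq_of_le h with h' | h'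
      · have : 1 / M < 0 := div_neg_of_pos_of_neg one_pos h'
        linarith
      · rw [h'] at hμ
        simp at hμ
        linarith
    intro j
    have hj : L j ≤ M := Finset.le_sup' L (Finset.mem_univ j)
    have h1 : μ * M ≤ 1 := (le_div_iff₀ hM0).1 hμ
    have h2 : M ≤ 1 / μ := (le_div_iff₀ hμ0).2 (by linarith [mul_comm μ M])
    linarith
  -- descent inequality with constant 1/μ
  have hdesc : ∀ (j : Fin K) (y z : EuclideanSpace ℝ (Fin n)),
      f j z ≤ f j y + ⟪g j y, z - y⟫ + 1 / (2 * μ) * ‖z - y‖ ^ 2 := by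
    intro j y z
    have h1 := famsa_descent (hgrad j) (hlip j) y z
    have h2 : L j / 2 * ‖z - y‖ ^ 2 ≤ 1 / (2 * μ) * ‖z - y‖ ^ 2 := by
      apply mul_le_mul_of_nonneg_right _ (by positivity)
      have := hM j
      have he : 1 / (2 * μ) = (1 / μ) / 2 := by ring
      rw [he]
      linarith
    linarith
  have hsubg : ∀ (j : Fin K) (y u : EuclideanSpace ℝ (Fin n)),
      f j y + ⟪g j y, u - y⟫ ≤ f j u := fun j y u =>
    famsa_grad_ineq (hconv j) (hgrad j) y u
  -- convexity of the total objective
  have hFconv : ConvexOn ℝ Set.univ (fun y : EuclideanSpace ℝ (Fin n) => ∑ j, f j y) := by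
    have hgen : ∀ s : Finset (Fin K),
        ConvexOn ℝ Set.univ (fun y : EuclideanSpace ℝ (Fin n) => ∑ j ∈ s, f j y) := by
      intro s
      induction s using Finset.cons_induction with
      | empty => simpa using convexOn_const (0:ℝ) convex_univ
      | cons a s ha ih =>
        have h2 : (fun y : EuclideanSpace ℝ (Fin n) => ∑ j ∈ Finset.cons a s ha, f j y)
            = (f a + fun y => ∑ j ∈ s, f j y) := by
          funext y; rw [Finset.sum_cons]; rfl
        rw [h2]; exact (hconv a).add ih
    exact hgen Finset.univ
  -- key surrogate inequality
  set σ2 : ℝ := ((K : ℝ) - 1) / μ / 2 with hσ2def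
  have hσ2nn : 0 ≤ σ2 := by
    rw [hσ2def]
    have : (0:ℝ) ≤ (K:ℝ) - 1 := by linarith
    positivity
  have key : ∀ k : ℕ, 1 ≤ k → ∀ i u, ∑ j, f j (x k i) ≤ ∑ j, f j u
      + σ2 * (‖u - w k i‖ ^ 2 - ‖u - x k i‖ ^ 2) := by
    intro k hk i u
    exact famsa_key hμ0 i (w k i) (x k i) (hconv i) (fun j => hdesc j (w k i) (x k i))
      (fun j v => hsubg j (w k i) v) (hx k hk i) u
  -- properties of t
  have tlow : ∀ k : ℕ, 1 ≤ k → ((k:ℝ)+1)/2 ≤ t k := by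
    intro k hk
    induction k with
    | zero => omega
    | succ m ih =>
      by_cases hm : 1 ≤ m
      · have ihm := ih hm
        have hm1 : (1:ℝ) ≤ (m:ℝ) := by exact_mod_cast hm
        have htm : 0 ≤ t m := by linarith
        rw [htrec m hm]
        have hs : 2 * t m ≤ Real.sqrt (1 + 4 * t m ^ 2) := by
          rw [show (2 * t m) = Real.sqrt ((2 * t m)^2) from (Real.sqrt_sq (by linarith)).symm]
          apply Real.sqrt_le_sqrt; nlinarith
        push_cast
        linarith
      · have hm0 : m = 0 := by omega
        subst hm0
        rw [ht1]; norm_num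
  have tpos : ∀ k : ℕ, 1 ≤ k → 1 ≤ t k := by
    intro k hk
    have h1 := tlow k hk
    have h2 : (1:ℝ) ≤ (k:ℝ) := by exact_mod_cast hk
    linarith
  have trec2 : ∀ k : ℕ, 1 ≤ k → t (k+1)^2 = t (k+1) + t k ^2 := by
    intro k hk
    have harg : (0:ℝ) ≤ 1 + 4 * t k ^ 2 := by positivity
    have hs := Real.sq_sqrt harg
    rw [htrec k hk]
    linear_combination (1/4 : ℝ) * hs
  -- Lyapunov quantities
  set Fs : ℝ := ∑ j, f j xstar with hFs
  set U : ℕ → Fin K → EuclideanSpace ℝ (Fin n) :=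
    fun k i => t k • x k i - (t k - 1) • what (k-1) i - xstar with hU
  set A : ℕ → Fin K → ℝ :=
    fun k i => t k ^ 2 * ((∑ j, f j (x k i)) - Fs) + σ2 * ‖U k i‖ ^ 2 with hA
  set S : ℕ → ℝ := fun k => ∑ i, A k i with hS
  set R2 : ℝ := ‖x0 - xstar‖ ^ 2 with hR2
  -- base case
  have base : ∀ i, A 1 i ≤ σ2 * R2 := by
    intro i
    have hk := key 1 le_rfl i xstar
    have hw1 : w 1 i = x0 := (hinit i).2.2
    have hU1 : U 1 i = x 1 i - xstar := by
      rw [hU]; simp only []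
      rw [ht1]
      module
    have hn1 : ‖xstar - w 1 i‖ ^ 2 = R2 := by
      rw [hw1, norm_sub_rev, hR2]
    have hn2 : ‖xstar - x 1 i‖ ^ 2 = ‖U 1 i‖ ^ 2 := by
      rw [hU1, norm_sub_rev]
    rw [hn1, hn2] at hk
    rw [hA]; simp only []
    rw [ht1]
    nlinarith [hk]
  -- induction step
  have step : ∀ k : ℕ, 1 ≤ k → S (k+1) ≤ S k := by
    intro k hk
    have hτ1 : 1 ≤ t (k+1) := tpos (k+1) (by omega)
    have hτ0 : 0 < t (k+1) := by linarith
    have hτn : t (k+1) ≠ 0 := ne_of_gt hτ0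
    have hstepi : ∀ i, A (k+1) i ≤
        t k ^ 2 * (∑ j, D k j i * ((∑ j', f j' (x k j)) - Fs)) + σ2 * ‖U k i‖ ^ 2 := by
      intro i
      set uu : EuclideanSpace ℝ (Fin n) :=
        (1 - 1/(t (k+1))) • what k i + (1/(t (k+1))) • xstar with huu
      have hkey := key (k+1) (by omega) i uu
      -- c1
      have hw : t (k+1) • (uu - w (k+1) i) = -(U k i) := by
        rw [hwupd k hk i, huu, hU]
        simp only []
        match_scalars <;> (field_simp; try ring)
      have hn1 : (t (k+1))^2 * ‖uu - w (k+1) i‖ ^ 2 = ‖U k i‖ ^ 2 := by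
        have h := congrArg norm hw
        rw [norm_smul, Real.norm_eq_abs, abs_of_pos hτ0, norm_neg] at h
        rw [← h]; ring
      -- c2
      have hx2 : t (k+1) • (uu - x (k+1) i) = -(U (k+1) i) := by
        rw [huu, hU]
        simp only [Nat.add_sub_cancel]
        match_scalars <;> (field_simp; try ring)
      have hn2 : (t (k+1))^2 * ‖uu - x (k+1) i‖ ^ 2 = ‖U (k+1) i‖ ^ 2 := by
        have h := congrArg norm hx2
        rw [norm_smul, Real.norm_eq_abs, abs_of_pos hτ0, norm_neg] at h
        rw [← h]; ring
      -- c3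
      have hc3 : (∑ j, f j uu) ≤ (1 - 1/(t (k+1))) * (∑ j, f j (what k i))
          + (1/(t (k+1))) * Fs := by
        have h1τ : (0:ℝ) ≤ 1 - 1/(t (k+1)) := by
          have : 1/(t (k+1)) ≤ 1 := by rw [div_le_one hτ0]; linarith
          linarith
        have h2τ : (0:ℝ) ≤ 1/(t (k+1)) := by positivity
        have := hFconv.2 (Set.mem_univ (what k i)) (Set.mem_univ xstar) h1τ h2τ
          (by field_simp; ring)
        rw [huu, hFs]
        simpa [smul_eq_mul] using this
      -- c4
      have hc4 : (∑ j, f j (what k i)) ≤ ∑ j, D k j i * (∑ j', f j' (x k j)) := by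
        rw [hwhat k hk i]
        exact hFconv.map_sum_le (fun j _ => hDnn k j i) (hDcol k i)
          (fun j _ => Set.mem_univ _)
      -- combine
      have hτ2 : (0:ℝ) < (t (k+1))^2 := by positivity
      have e1 : (t (k+1))^2 * (1 - 1/(t (k+1))) = (t (k+1))^2 - t (k+1) := by
        field_simp
      have e2 : (t (k+1))^2 * (1/(t (k+1))) = t (k+1) := by
        field_simp
      have m1 := mul_le_mul_of_nonneg_left hkey (le_of_lt hτ2)
      rw [mul_add] at m1
      have m2 := mul_le_mul_of_nonneg_left hc3 (le_of_lt hτ2)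
      rw [mul_add, ← mul_assoc, ← mul_assoc, e1, e2] at m2
      have m3 : (t (k+1))^2 * (σ2 * (‖uu - w (k+1) i‖ ^ 2 - ‖uu - x (k+1) i‖ ^ 2))
          = σ2 * (‖U k i‖ ^ 2 - ‖U (k+1) i‖ ^ 2) := by
        linear_combination σ2 * hn1 - σ2 * hn2
      have hmain : (t (k+1))^2 * ((∑ j, f j (x (k+1) i)) - Fs)
          ≤ ((t (k+1))^2 - t (k+1)) * ((∑ j, f j (what k i)) - Fs)
            + σ2 * (‖U k i‖ ^ 2 - ‖U (k+1) i‖ ^ 2) := by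
        nlinarith [m1, m2, m3]
      have hDsum : ∑ j, D k j i * ((∑ j', f j' (x k j)) - Fs)
          = (∑ j, D k j i * (∑ j', f j' (x k j))) - Fs := by
        rw [show ∀ v : Fin K → ℝ, ∑ j, D k j i * (v j - Fs)
            = (∑ j, D k j i * v j) - (∑ j, D k j i) * Fs from fun v => by
          rw [Finset.sum_mul, ← Finset.sum_sub_distrib]; congr 1; ext j; ring]
        rw [hDcol k i]; ring
      have htk2 : (0:ℝ) ≤ t k ^ 2 := sq_nonneg _
      have hwb : t k ^ 2 * ((∑ j, f j (what k i)) - Fs)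
          ≤ t k ^ 2 * (∑ j, D k j i * ((∑ j', f j' (x k j)) - Fs)) := by
        apply mul_le_mul_of_nonneg_left _ htk2
        rw [hDsum]
        linarith [hc4]
      have htrec' : (t (k+1))^2 - t (k+1) = t k ^2 := by
        have := trec2 k hk
        linarith
      rw [hA]; simp only []
      rw [htrec'] at hmain
      linarith
    -- sum over i
    have hsum : ∑ i, (t k ^ 2 * (∑ j, D k j i * ((∑ j', f j' (x k j)) - Fs)) + σ2 * ‖U k i‖ ^ 2)
        = S k := by
      rw [Finset.sum_add_distrib]
      have hswap : ∑ i, t k ^ 2 * (∑ j, D k j i * ((∑ j', f j' (x k j)) - Fs))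
          = ∑ j, t k ^ 2 * ((∑ j', f j' (x k j)) - Fs) := by
        rw [← Finset.mul_sum, Finset.sum_comm]
        rw [← Finset.mul_sum]
        congr 1
        apply Finset.sum_congr rfl
        intro j _
        rw [← Finset.sum_mul, hDrow k j, one_mul]
      rw [hswap, hS, hA]
      rw [← Finset.sum_add_distrib]
    calc S (k+1) = ∑ i, A (k+1) i := by rw [hS]
      _ ≤ ∑ i, (t k ^ 2 * (∑ j, D k j i * ((∑ j', f j' (x k j)) - Fs)) + σ2 * ‖U k i‖ ^ 2) :=
          Finset.sum_le_sum (fun i _ => hstepi i)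
      _ = S k := hsum
  -- S k bounded
  have Sbound : ∀ k : ℕ, 1 ≤ k → S k ≤ (K:ℝ) * (σ2 * R2) := by
    intro k hk
    induction k with
    | zero => omega
    | succ m ih =>
      by_cases hm : 1 ≤ m
      · exact le_trans (step m hm) (ih hm)
      · have hm0 : m = 0 := by omega
        subst hm0
        calc S 1 = ∑ i, A 1 i := by rw [hS]
          _ ≤ ∑ _i : Fin K, σ2 * R2 := Finset.sum_le_sum (fun i _ => base i)
          _ = (K:ℝ) * (σ2 * R2) := by
              rw [Finset.sum_const, Finset.card_univ, Fintype.card_fin, nsmul_eq_mul]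
  -- conclusion
  intro k hk
  set inf' := Finset.univ.inf' (Finset.univ_nonempty_iff.mpr ⟨⟨0, hK⟩⟩)
    (fun i => ∑ j, f j (x k i)) with hinf
  have hle : ∀ i, inf' ≤ ∑ j, f j (x k i) := fun i =>
    Finset.inf'_le _ (Finset.mem_univ i)
  have htk := tlow k hk
  have hk1 : (1:ℝ) ≤ (k:ℝ) := by exact_mod_cast hk
  have htk0 : 0 < t k := by linarith
  have htk2 : (0:ℝ) < t k ^ 2 := by positivity
  have hSk := Sbound k hk
  have hKsum : (K:ℝ) * (t k ^2 * (inf' - Fs)) ≤ S k := by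
    have h1 : ∀ i, t k ^2 * (inf' - Fs) ≤ A k i := by
      intro i
      rw [hA]; simp only []
      have h2 : t k ^ 2 * (inf' - Fs) ≤ t k ^ 2 * ((∑ j, f j (x k i)) - Fs) :=
        mul_le_mul_of_nonneg_left (by linarith [hle i]) htk2.le
      nlinarith [sq_nonneg ‖U k i‖, hσ2nn, mul_nonneg hσ2nn (sq_nonneg ‖U k i‖)]
    calc (K:ℝ) * (t k ^2 * (inf' - Fs)) = ∑ _i : Fin K, t k ^2 * (inf' - Fs) := by
          rw [Finset.sum_const, Finset.card_univ, Fintype.card_fin, nsmul_eq_mul]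
      _ ≤ ∑ i, A k i := Finset.sum_le_sum (fun i _ => h1 i)
      _ = S k := by rw [hS]
  have hKpos : (0:ℝ) < (K:ℝ) := by linarith
  have hmain : t k ^2 * (inf' - Fs) ≤ σ2 * R2 := by
    have h := le_trans hKsum hSk
    exact le_of_mul_le_mul_left h hKpos
  -- final bound
  have hkp : (0:ℝ) < ((k:ℝ)+1)^2 := by positivity
  have hRHS : 2 * ((K : ℝ) - 1) * ‖x0 - xstar‖ ^ 2 / (μ * ((k : ℝ) + 1) ^ 2)
      = 4 * σ2 * R2 / ((k:ℝ)+1)^2 := by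
    rw [hσ2def, hR2]
    field_simp
    ring
  rw [hRHS]
  by_cases hsign : inf' - Fs ≤ 0
  · have hnn : (0:ℝ) ≤ 4 * σ2 * R2 / ((k:ℝ)+1)^2 := by positivity
    linarith
  · push_neg at hsign
    have h1 : ((k:ℝ)+1)^2 / 4 ≤ t k ^2 := by nlinarith
    have h2 : ((k:ℝ)+1)^2 / 4 * (inf' - Fs) ≤ t k ^2 * (inf' - Fs) :=
      mul_le_mul_of_nonneg_right h1 hsign.le
    have h3 : ((k:ℝ)+1)^2 / 4 * (inf' - Fs) ≤ σ2 * R2 := le_trans h2 hmain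
    rw [le_div_iff₀ hkp]
    nlinarith [h3]
end
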